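/- arXiv:1607.06806 — 2 statements merged into one kernel-verified Lean document; each statement's English description precedes it below -/
import Mathlib

section
/- Fix s > 0 and define g_s : ℝ → ℝ by g_s(d) = s·sign(d) if 0 < |d| < 1/2, g_s(d) = −s·sign(d) if 1/2 < |d| ≤ 1, and g_s(0) = 0. Let k ≥ 1, N = 3k, and let o : Fin N → ℝ be opinions taking exactly three values v₁ < v₂ < v₃, each attained by exactly k agents, with 0 < v₂−v₁ < 1/2, 0 < v₃−v₂ < 1/2, and 1/2 < v₃−v₁ < 1. Then o is a fixed point of the tent opinion vector field on ℝ^N, i.e. F(o)ᵢ = Σ_{j≠i} g_s(o_j − o_i) = 0 for every agent i. -/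
/-! Each agent feels the attraction `±s` of the middle group and the repulsion `∓s` of the
far outer group (or, at the middle value, attractions `-s` and `+s` from the two outer groups),
so the three forces exerted on an agent by one representative of each group cancel. With `k`
agents per group the total force is `k` times this balanced three-agent force. -/

/-- The tent pair-interaction force: attraction of magnitude `s` for opinion
differences below `1/2`, repulsion above `1/2`, zero at equal opinions. -/
noncomputable def tentForce (s d : ℝ) : ℝ :=
  if 0 < |d| ∧ |d| < 1/2 then s * Real.sign d
  else if 1/2 < |d| ∧ |d| ≤ 1 then -(s * Real.sign d)
  else 0

lemma tentForce_zero (s : ℝ) : tentForce s 0 = 0 := by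
  simp [tentForce]

lemma tentForce_neg (s d : ℝ) : tentForce s (-d) = -tentForce s d := by
  unfold tentForce
  simp only [abs_neg, Real.sign_neg, mul_neg]
  split_ifs <;> ring

lemma tentForce_of_pos_of_lt_half (s : ℝ) {d : ℝ} (h0 : 0 < d) (h : d < 1/2) :
    tentForce s d = s := by
  rw [tentForce, abs_of_pos h0, if_pos ⟨h0, h⟩, Real.sign_of_pos h0, mul_one]

lemma tentForce_of_half_lt_of_le_one (s : ℝ) {d : ℝ} (h0 : 1/2 < d) (h : d ≤ 1) :
    tentForce s d = -s := by
  have hd : 0 < d := by linarith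
  rw [tentForce, abs_of_pos hd, if_neg (by rintro ⟨-, h'⟩; linarith), if_pos ⟨h0, h⟩,
    Real.sign_of_pos hd, mul_one]

lemma tentForce_three_point_balance (s : ℝ) {v1 v2 v3 x : ℝ}
    (hg1 : 0 < v2 - v1) (hg1' : v2 - v1 < 1/2) (hg2 : 0 < v3 - v2) (hg2' : v3 - v2 < 1/2)
    (hg3 : 1/2 < v3 - v1) (hg3' : v3 - v1 ≤ 1) (hx : x = v1 ∨ x = v2 ∨ x = v3) :
    tentForce s (v1 - x) + tentForce s (v2 - x) + tentForce s (v3 - x) = 0 := by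
  have h21 := tentForce_of_pos_of_lt_half s hg1 hg1'
  have h32 := tentForce_of_pos_of_lt_half s hg2 hg2'
  have h31 := tentForce_of_half_lt_of_le_one s hg3 hg3'
  rcases hx with rfl | rfl | rfl
  · rw [sub_self, tentForce_zero, h21, h31]; ring
  · rw [← neg_sub, tentForce_neg, sub_self, tentForce_zero, h21, h32]; ring
  · rw [← neg_sub, tentForce_neg, ← neg_sub _ v2, tentForce_neg, sub_self, tentForce_zero,
      h31, h32]; ring

lemma Finset.sum_comp_of_three_values {ι α M : Type*} [Fintype ι] [DecidableEq α]
    [AddCommMonoid M] (f : α → M) (o : ι → α) {v1 v2 v3 : α} {k : ℕ}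
    (h12 : v1 ≠ v2) (h13 : v1 ≠ v3) (h23 : v2 ≠ v3)
    (hval : ∀ i, o i = v1 ∨ o i = v2 ∨ o i = v3)
    (hc1 : (univ.filter fun i => o i = v1).card = k)
    (hc2 : (univ.filter fun i => o i = v2).card = k)
    (hc3 : (univ.filter fun i => o i = v3).card = k) :
    ∑ i, f (o i) = k • (f v1 + f v2 + f v3) := by
  have hmaps : ∀ i ∈ (univ : Finset ι), o i ∈ ({v1, v2, v3} : Finset α) := by
    simpa using hval
  rw [← sum_fiberwise_of_maps_to' hmaps, sum_insert (by simp [h12, h13]),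
    sum_pair h23]
  simp only [sum_const, hc1, hc2, hc3, smul_add, add_assoc]

theorem tent_fixed_point_3k_general (s : ℝ) (k : ℕ)
    (o : Fin (3 * k) → ℝ) (v1 v2 v3 : ℝ)
    (hval : ∀ i, o i = v1 ∨ o i = v2 ∨ o i = v3)
    (hc1 : (Finset.univ.filter fun i => o i = v1).card = k)
    (hc2 : (Finset.univ.filter fun i => o i = v2).card = k)
    (hc3 : (Finset.univ.filter fun i => o i = v3).card = k)
    (hg1 : 0 < v2 - v1) (hg1' : v2 - v1 < 1/2)
    (hg2 : 0 < v3 - v2) (hg2' : v3 - v2 < 1/2)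
    (hg3 : 1/2 < v3 - v1) (hg3' : v3 - v1 < 1) :
    ∀ i : Fin (3 * k), ∑ j ∈ Finset.univ.erase i, tentForce s (o j - o i) = 0 := by
  intro i
  rw [Finset.sum_erase _ (by rw [sub_self, tentForce_zero]),
    Finset.sum_comp_of_three_values (fun v => tentForce s (v - o i)) o
      (by linarith) (by linarith) (by linarith) hval hc1 hc2 hc3,
    tentForce_three_point_balance s hg1 hg1' hg2 hg2' hg3 hg3'.le (hval i), smul_zero]

/-- Corollary: in a fully connected population of `N = 3k` agents whose
opinions take exactly three values `v₁ < v₂ < v₃`, each attained by exactly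
`k` agents, with consecutive gaps in `(0, 1/2)` and outer gap in `(1/2, 1)`,
the opinion profile is a fixed point of the tent opinion vector field. -/
theorem tent_fixed_point_3k (s : ℝ) (hs : 0 < s) (k : ℕ) (hk : 1 ≤ k)
    (o : Fin (3 * k) → ℝ) (v1 v2 v3 : ℝ)
    (hv12 : v1 < v2) (hv23 : v2 < v3)
    (hval : ∀ i, o i = v1 ∨ o i = v2 ∨ o i = v3)
    (hc1 : (Finset.univ.filter fun i => o i = v1).card = k)
    (hc2 : (Finset.univ.filter fun i => o i = v2).card = k)
    (hc3 : (Finset.univ.filter fun i => o i = v3).card = k)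
    (hg1 : 0 < v2 - v1) (hg1' : v2 - v1 < 1/2)
    (hg2 : 0 < v3 - v2) (hg2' : v3 - v2 < 1/2)
    (hg3 : 1/2 < v3 - v1) (hg3' : v3 - v1 < 1) :
    ∀ i : Fin (3 * k), ∑ j ∈ Finset.univ.erase i, tentForce s (o j - o i) = 0 :=
  tent_fixed_point_3k_general s k o v1 v2 v3 hval hc1 hc2 hc3 hg1 hg1' hg2 hg2' hg3 hg3'
end

section
/- Fix s > 0 and define g_s : ℝ → ℝ by g_s(d) = s·sign(d) if 0 < |d| < 1/2, g_s(d) = −s·sign(d) if 1/2 < |d| ≤ 1, and g_s(0) = 0, and the tent opinion vector field on ℝ³ by F(o)ᵢ = Σ_{j≠i} g_s(o_j − o_i). Then for each of the six strict-order regions of ℝ³ — obtained from R₁ = {0 < o₂−o₁ < 1/2, 0 < o₃−o₂ < 1/2, 1/2 < o₃−o₁ < 1} by permuting the roles of the three coordinates (i.e. for each permutation σ of {1,2,3}, the region where 0 < o_{σ(2)}−o_{σ(1)} < 1/2, 0 < o_{σ(3)}−o_{σ(2)} < 1/2, and 1/2 < o_{σ(3)}−o_{σ(1)} < 1) — every point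 of the region satisfies F(o) = 0. -/
/-- The tent opinion vector field on `ℝ³` for three fully connected agents. -/
noncomputable def tentField (s : ℝ) (o : Fin 3 → ℝ) : Fin 3 → ℝ :=
  fun i => ∑ j ∈ Finset.univ.erase i, tentForce s (o j - o i)

lemma tentForce_pos_small (s d : ℝ) (h : 0 < d) (h' : d < 1/2) :
    tentForce s d = s := by
  rw [tentForce, if_pos]
  · rw [Real.sign_of_pos h]; ring
  · rw [abs_of_pos h]; exact ⟨h, h'⟩

lemma tentForce_pos_big (s d : ℝ) (h : 1/2 < d) (h' : d ≤ 1) :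
    tentForce s d = -s := by
  rw [tentForce, if_neg, if_pos]
  · rw [Real.sign_of_pos (by linarith)]; ring
  · rw [abs_of_pos (by linarith)]; exact ⟨h, h'⟩
  · rw [abs_of_pos (by linarith)]; rintro ⟨-, h2⟩; linarith

/-- All six strict-order regions (obtained from `R₁` by permuting the roles of
the three coordinates) consist entirely of fixed points of the tent opinion
vector field. -/
theorem tent_fixed_point_all_orderings (s : ℝ) (hs : 0 < s)
    (σ : Equiv.Perm (Fin 3)) (o : Fin 3 → ℝ)
    (h1 : 0 < o (σ 1) - o (σ 0)) (h1' : o (σ 1) - o (σ 0) < 1/2)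
    (h2 : 0 < o (σ 2) - o (σ 1)) (h2' : o (σ 2) - o (σ 1) < 1/2)
    (h3 : 1/2 < o (σ 2) - o (σ 0)) (h3' : o (σ 2) - o (σ 0) < 1) :
    tentField s o = 0 := by
  have key : ∀ i : Fin 3, tentField s o i =
      ∑ j : Fin 3, tentForce s (o (σ j) - o i) := by
    intro i
    rw [tentField]
    rw [Finset.sum_erase _ (by rw [sub_self, tentForce_zero])]
    exact (Equiv.sum_comp σ (fun j => tentForce s (o j - o i))).symm
  funext i
  obtain ⟨k, rfl⟩ : ∃ k, i = σ k := ⟨σ.symm i, (σ.apply_symm_apply i).symm⟩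
  rw [Pi.zero_apply, key (σ k), Fin.sum_univ_three]
  have ha : o (σ 0) - o (σ 1) = -(o (σ 1) - o (σ 0)) := by ring
  have hb : o (σ 1) - o (σ 2) = -(o (σ 2) - o (σ 1)) := by ring
  have hc : o (σ 0) - o (σ 2) = -(o (σ 2) - o (σ 0)) := by ring
  fin_cases k <;> beta_reduce <;>
    simp only [Fin.zero_eta, Fin.mk_one, Fin.reduceFinMk]
  · rw [sub_self, tentForce_zero,
      tentForce_pos_small s _ h1 h1', tentForce_pos_big s _ h3 (le_of_lt h3')]
    ring
  · rw [sub_self, tentForce_zero, ha, tentForce_neg,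
      tentForce_pos_small s _ h1 h1', tentForce_pos_small s _ h2 h2']
    ring
  · rw [sub_self, tentForce_zero, hb, hc, tentForce_neg, tentForce_neg,
      tentForce_pos_small s _ h2 h2', tentForce_pos_big s _ h3 (le_of_lt h3')]
    ring
end
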